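/- Define the 8×8 real matrices J₁ = [[ρ, 0], [0, ρ]], J₂ = [[0, α], [−α, 0]], J₃ = [[0, Ω], [−Ω, 0]], where ρ = [[0, A], [A, 0]], α = [[A, 0], [0, −A]], Ω = [[0, I₂], [−I₂, 0]] are 4×4 matrices and A = [[0, −1], [1, 0]]. Then J₁ · J₂ · J₃ = I₈; together with J₁² = −I₈, J₂² = J₃² = I₈ and the η-compatibility of each Jᵢ, the triple {J₁, J₂, J₃} forms a generalized hyper-para-complex structure. -/
import Mathlib


open Matrix

/-- The 2×2 block `A = [[0,−1],[1,0]]`. -/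
def A2 : Matrix (Fin 2) (Fin 2) ℝ := !![0, -1; 1, 0]

/-- The complex structure `ρ = [[0,A],[A,0]]`. -/
def ρm : Matrix (Fin 2 ⊕ Fin 2) (Fin 2 ⊕ Fin 2) ℝ := Matrix.fromBlocks 0 A2 A2 0

/-- The matrix `α = [[A,0],[0,−A]]` of the 2-form `dp∧dq − dx∧dy`. -/
def αm : Matrix (Fin 2 ⊕ Fin 2) (Fin 2 ⊕ Fin 2) ℝ := Matrix.fromBlocks A2 0 0 (-A2)

/-- The matrix `Ω = [[0,I₂],[−I₂,0]]` of the canonical symplectic form. -/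
def Ωm : Matrix (Fin 2 ⊕ Fin 2) (Fin 2 ⊕ Fin 2) ℝ := Matrix.fromBlocks 0 1 (-1) 0

/-- The matrix `η = [[0,I₄],[I₄,0]]` of the natural inner product on `𝕋M`. -/
def ηm : Matrix ((Fin 2 ⊕ Fin 2) ⊕ (Fin 2 ⊕ Fin 2)) ((Fin 2 ⊕ Fin 2) ⊕ (Fin 2 ⊕ Fin 2)) ℝ :=
  Matrix.fromBlocks 0 1 1 0

lemma hA2 : A2 * A2 = -1 := by
  ext i j
  fin_cases i <;> fin_cases j <;> simp [A2, Matrix.mul_apply, Fin.sum_univ_succ]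

lemma hAT : A2ᵀ = -A2 := by
  ext i j
  fin_cases i <;> fin_cases j <;> simp [A2]

lemma hneg1 : (-1 : Matrix (Fin 2 ⊕ Fin 2) (Fin 2 ⊕ Fin 2) ℝ) = Matrix.fromBlocks (-1) 0 0 (-1) := by
  simp [← Matrix.fromBlocks_one, Matrix.fromBlocks_neg]

lemma hone : (1 : Matrix (Fin 2 ⊕ Fin 2) (Fin 2 ⊕ Fin 2) ℝ) = Matrix.fromBlocks 1 0 0 1 :=
  (Matrix.fromBlocks_one).symm

lemma hρ2 : ρm * ρm = -1 := by
  rw [ρm, Matrix.fromBlocks_multiply, hneg1]; simp [hA2]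

lemma hα2 : αm * αm = -1 := by
  rw [αm, Matrix.fromBlocks_multiply, hneg1]; simp [hA2]

lemma hΩ2 : Ωm * Ωm = -1 := by
  rw [Ωm, Matrix.fromBlocks_multiply, hneg1]; simp

lemma hρα : ρm * αm = Ωm := by
  rw [ρm, αm, Matrix.fromBlocks_multiply, Ωm]; simp [hA2]

lemma hρT : ρmᵀ = -ρm := by
  rw [ρm, Matrix.fromBlocks_transpose]; simp [hAT, ρm, Matrix.fromBlocks_neg]

lemma hαT : αmᵀ = -αm := by
  rw [αm, Matrix.fromBlocks_transpose]; simp [hAT, αm, Matrix.fromBlocks_neg]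

lemma hΩT : Ωmᵀ = -Ωm := by
  rw [Ωm, Matrix.fromBlocks_transpose]; simp [Ωm, Matrix.fromBlocks_neg]

/-- The triple `{J₁, J₂, J₃}` (sign parameters `ε₁ = 1`, `ε₂ = ε₃ = −1`) is a
generalized hyper-para-complex structure: `J₁J₂J₃ = I₈`, `J₁² = −I₈`,
`J₂² = J₃² = I₈`, and each `Jᵢ` is `η`-compatible (with `J₁ᵀηJ₁ = η` for the
generalized complex structure and `Jᵢᵀ η Jᵢ = −η` for the para-complex ones). -/
theorem generalized_hyper_para_complex
    (J₁ J₂ J₃ : Matrix ((Fin 2 ⊕ Fin 2) ⊕ (Fin 2 ⊕ Fin 2)) ((Fin 2 ⊕ Fin 2) ⊕ (Fin 2 ⊕ Fin 2)) ℝ)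
    (hJ₁ : J₁ = Matrix.fromBlocks ρm 0 0 ρm)
    (hJ₂ : J₂ = Matrix.fromBlocks 0 αm (-αm) 0)
    (hJ₃ : J₃ = Matrix.fromBlocks 0 Ωm (-Ωm) 0) :
    J₁ * J₂ * J₃ = 1 ∧
    J₁ * J₁ = -1 ∧ J₂ * J₂ = 1 ∧ J₃ * J₃ = 1 ∧
    J₁ᵀ * ηm * J₁ = ηm ∧ J₂ᵀ * ηm * J₂ = -ηm ∧ J₃ᵀ * ηm * J₃ = -ηm := by
  subst hJ₁ hJ₂ hJ₃
  refine ⟨?_, ?_, ?_, ?_, ?_, ?_, ?_⟩ <;>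
    simp [Matrix.fromBlocks_multiply, Matrix.fromBlocks_transpose, ηm,
      hρ2, hα2, hΩ2, hρα, hρT, hαT, hΩT, Matrix.fromBlocks_neg,
      ← Matrix.fromBlocks_one, mul_neg, neg_mul]
  all_goals simp [Matrix.fromBlocks_one, hρ2, hα2, hΩ2, ← hneg1]
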